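/- arXiv:1609.06286 — 3 statements merged into one kernel-verified Lean document; each statement's English description precedes it below -/
import Mathlib

section
/- Let $0 < \lambda < 1$, $\mu > 0$, and $\beta \geq 0$. Then there exists a constant $C > 0$ such that for all $t \geq 0$, $e^{-\frac{\mu}{1-\lambda}(1+t)^{1-\lambda}} \int_0^t (1+\tau)^{-\beta} e^{\frac{\mu}{1-\lambda}(1+\tau)^{1-\lambda}}\,d\tau \leq C(1+t)^{-\beta+\lambda}$. -/
/-!
Write `E(τ) = exp (a (1 + τ)^p)` with `a, p > 0`. The function `H(τ) = (1 + τ)^δ E(τ)` has derivative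
`(1 + τ)^(δ - 1) E(τ) (δ + a p (1 + τ)^p)`, which for large `τ` dominates `a p / 2` times the
integrand `(1 + τ)^(δ + p - 1) E(τ)`. So beyond some threshold `T` the integral grows by at most
`2 / (a p)` times the growth of `H`, while the part over `[0, T]` is a constant, absorbed into `C H(t)`
because `H` is bounded below by a positive constant on `[0, ∞)`. The theorem is the case
`a = μ / (1 - λ)`, `p = 1 - λ`, `δ = λ - β`, after multiplying by `1 / E(t)`.
-/

open intervalIntegral Real Set Filter

theorem exists_pos_forall_le_of_tail_ge {h : ℝ → ℝ} {T : ℝ} (hT : 0 ≤ T)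
    (hh : ContinuousOn h (Icc 0 T)) (hpos : ∀ x ∈ Icc 0 T, 0 < h x)
    (htail : ∀ t ≥ T, h T ≤ h t) :
    ∃ m > 0, ∀ t ≥ 0, m ≤ h t := by
  obtain ⟨x₀, hx₀, hmin⟩ := isCompact_Icc.exists_isMinOn (nonempty_Icc.2 hT) hh
  refine ⟨h x₀, hpos x₀ hx₀, fun t ht => ?_⟩
  rcases le_total t T with htT | hTt
  · exact hmin ⟨ht, htT⟩
  · exact (hmin ⟨hT, le_rfl⟩).trans (htail t hTt)

theorem mul_integral_le_sub_of_le_deriv {g h h' : ℝ → ℝ} {c a b : ℝ} (hab : a ≤ b)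
    (hg : ContinuousOn g (Icc a b)) (hh : ContinuousOn h (Icc a b))
    (hderiv : ∀ x ∈ Ioo a b, HasDerivAt h (h' x) x) (hle : ∀ x ∈ Ioo a b, c * g x ≤ h' x) :
    c * ∫ x in a..b, g x ≤ h b - h a := by
  rw [← integral_const_mul]
  exact integral_le_sub_of_hasDeriv_right_of_le hab hh
    (fun x hx => (hderiv x hx).hasDerivWithinAt) (hg.const_smul c).integrableOn_Icc hle

theorem exists_integral_le_mul_of_eventually_le_deriv {g h h' : ℝ → ℝ} {c : ℝ} (hc : 0 < c)
    (hg : ContinuousOn g (Ici 0)) (hg0 : ∀ x ∈ Ici 0, 0 ≤ g x)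
    (hh : ContinuousOn h (Ici 0)) (hh0 : ∀ x ∈ Ici 0, 0 < h x)
    (hev : ∀ᶠ x in atTop, HasDerivAt h (h' x) x ∧ c * g x ≤ h' x) :
    ∃ C > 0, ∀ t ≥ 0, ∫ τ in 0..t, g τ ≤ C * h t := by
  obtain ⟨T₀, hT₀⟩ := eventually_atTop.1 hev
  set T := max T₀ 0
  have hT : 0 ≤ T := le_max_right _ _
  have hIcc : ∀ t ≥ T, Icc T t ⊆ Ici 0 := fun t _ x hx => hT.trans hx.1
  have hIoo : ∀ t, ∀ x ∈ Ioo T t, T₀ ≤ x := fun t x hx => (le_max_left _ _).trans hx.1.le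
  have hgrowth : ∀ t ≥ T, c * ∫ τ in T..t, g τ ≤ h t - h T := fun t ht =>
    mul_integral_le_sub_of_le_deriv ht (hg.mono (hIcc t ht)) (hh.mono (hIcc t ht))
      (fun x hx => (hT₀ x (hIoo t x hx)).1) (fun x hx => (hT₀ x (hIoo t x hx)).2)
  have htail_nonneg : ∀ t ≥ T, 0 ≤ ∫ τ in T..t, g τ := fun t ht =>
    integral_nonneg ht fun x hx => hg0 x (hIcc t ht hx)
  obtain ⟨m, hm, hmh⟩ : ∃ m > 0, ∀ t ≥ 0, m ≤ h t :=
    exists_pos_forall_le_of_tail_ge hT (hh.mono Icc_subset_Ici_self) (fun x hx => hh0 x hx.1)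
      fun t ht => by nlinarith [hgrowth t ht, htail_nonneg t ht]
  set I := ∫ τ in 0..T, g τ
  have hint : ∀ u v, 0 ≤ u → 0 ≤ v → IntervalIntegrable g MeasureTheory.volume u v :=
    fun u v hu hv => (hg.mono fun x hx => (le_min hu hv).trans hx.1).intervalIntegrable
  have hI : 0 ≤ I := integral_nonneg hT fun x hx => hg0 x hx.1
  have hbound : ∀ t ≥ 0, ∫ τ in 0..t, g τ ≤ I + h t / c := by
    intro t ht
    have hht : 0 < h t / c := div_pos (hh0 t ht) hc
    rcases le_total t T with htT | hTt
    · have : ∫ τ in 0..t, g τ ≤ I :=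
        integral_mono_interval le_rfl ht htT
          (MeasureTheory.ae_restrict_of_forall_mem measurableSet_Ioc fun x hx => hg0 x hx.1.le)
          (hint 0 T le_rfl hT)
      linarith
    · rw [← integral_add_adjacent_intervals (hint 0 T le_rfl hT) (hint T t hT ht)]
      have : ∫ τ in T..t, g τ ≤ h t / c := by
        rw [le_div_iff₀ hc]
        nlinarith [hgrowth t hTt, hh0 T hT]
      exact add_le_add_right this I
  refine ⟨I / m + 1 / c, by positivity, fun t ht => (hbound t ht).trans ?_⟩
  have : I ≤ I / m * h t := by
    rw [div_mul_eq_mul_div, le_div_iff₀ hm]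
    exact mul_le_mul_of_nonneg_left (hmh t ht) hI
  rw [add_mul, one_div_mul_eq_div]
  linarith

section
variable {a p : ℝ}

theorem continuousOn_one_add_rpow_mul_exp (r : ℝ) :
    ContinuousOn (fun τ : ℝ => (1 + τ) ^ r * exp (a * (1 + τ) ^ p)) (Ici 0) := by
  have hrpow : ∀ s : ℝ, ContinuousOn (fun τ : ℝ => (1 + τ) ^ s) (Ici 0) := fun s =>
    ContinuousOn.rpow_const (by fun_prop) fun x hx => Or.inl (by linarith [mem_Ici.1 hx])
  exact (hrpow r).mul (continuous_exp.comp_continuousOn ((hrpow p).const_smul a))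

theorem one_add_rpow_mul_exp_pos (r : ℝ) {x : ℝ} (hx : 0 ≤ x) :
    0 < (1 + x) ^ r * exp (a * (1 + x) ^ p) :=
  mul_pos (rpow_pos_of_pos (by linarith) r) (exp_pos _)

theorem hasDerivAt_one_add_rpow_mul_exp (δ : ℝ) {x : ℝ} (hx : 0 < 1 + x) :
    HasDerivAt (fun τ => (1 + τ) ^ δ * exp (a * (1 + τ) ^ p))
      ((1 + x) ^ (δ - 1) * exp (a * (1 + x) ^ p) * (δ + a * p * (1 + x) ^ p)) x := by
  have hbase := (hasDerivAt_id x).const_add 1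
  have hδ := hbase.rpow_const (p := δ) (Or.inl hx.ne')
  have hexp := ((hbase.rpow_const (p := p) (Or.inl hx.ne')).const_mul a).exp
  refine (hδ.mul hexp).congr_deriv ?_
  have hsplit : (1 + x) ^ δ * (1 + x) ^ (p - 1) = (1 + x) ^ (δ - 1) * (1 + x) ^ p := by
    rw [← rpow_add hx, ← rpow_add hx]; ring_nf
  simp only [id, one_mul]
  linear_combination exp (a * (1 + x) ^ p) * a * p * hsplit

theorem mul_one_add_rpow_mul_exp_le_deriv {δ x : ℝ} (hx : 0 < 1 + x)
    (hδ : -δ ≤ a * p / 2 * (1 + x) ^ p) :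
    a * p / 2 * ((1 + x) ^ (δ + p - 1) * exp (a * (1 + x) ^ p)) ≤
      (1 + x) ^ (δ - 1) * exp (a * (1 + x) ^ p) * (δ + a * p * (1 + x) ^ p) := by
  have hsplit : (1 + x) ^ (δ + p - 1) = (1 + x) ^ (δ - 1) * (1 + x) ^ p := by
    rw [← rpow_add hx]; ring_nf
  have hpos : 0 < (1 + x) ^ (δ - 1) * exp (a * (1 + x) ^ p) :=
    mul_pos (rpow_pos_of_pos hx _) (exp_pos _)
  rw [hsplit]
  nlinarith

theorem exists_integral_one_add_rpow_mul_exp_le (ha : 0 < a) (hp : 0 < p) (δ : ℝ) :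
    ∃ C > 0, ∀ t ≥ 0, ∫ τ in 0..t, (1 + τ) ^ (δ + p - 1) * exp (a * (1 + τ) ^ p) ≤
      C * ((1 + t) ^ δ * exp (a * (1 + t) ^ p)) := by
  have hgrow : Tendsto (fun x : ℝ => a * p / 2 * (1 + x) ^ p) atTop atTop :=
    ((tendsto_rpow_atTop hp).comp (tendsto_atTop_add_const_left _ 1 tendsto_id)).const_mul_atTop
      (by positivity)
  refine exists_integral_le_mul_of_eventually_le_deriv (c := a * p / 2)
    (h' := fun x => (1 + x) ^ (δ - 1) * exp (a * (1 + x) ^ p) * (δ + a * p * (1 + x) ^ p))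
    (by positivity)
    (continuousOn_one_add_rpow_mul_exp _) (fun x hx => (one_add_rpow_mul_exp_pos _ hx).le)
    (continuousOn_one_add_rpow_mul_exp _) (fun x hx => one_add_rpow_mul_exp_pos _ hx) ?_
  filter_upwards [eventually_ge_atTop 0, hgrow.eventually_ge_atTop (-δ)] with x hx hδ
  have hx1 : 0 < 1 + x := by linarith
  exact ⟨hasDerivAt_one_add_rpow_mul_exp δ hx1, mul_one_add_rpow_mul_exp_le_deriv hx1 hδ⟩

end

theorem stmt_6_general (lam μ β : ℝ) (hlam1 : lam < 1) (hμ : 0 < μ) :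
    ∃ C > (0:ℝ), ∀ t ≥ (0:ℝ),
      Real.exp (-(μ / (1 - lam)) * (1 + t) ^ (1 - lam)) *
          ∫ τ in (0:ℝ)..t, (1 + τ) ^ (-β) * Real.exp ((μ / (1 - lam)) * (1 + τ) ^ (1 - lam))
        ≤ C * (1 + t) ^ (-β + lam) := by
  have hp : 0 < 1 - lam := sub_pos.2 hlam1
  obtain ⟨C, hC, hbound⟩ := exists_integral_one_add_rpow_mul_exp_le (div_pos hμ hp) hp (-β + lam)
  refine ⟨C, hC, fun t ht => ?_⟩
  have hint := hbound t ht
  rw [show -β + lam + (1 - lam) - 1 = -β by ring] at hint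
  set X := μ / (1 - lam) * (1 + t) ^ (1 - lam)
  have hcancel : exp (-(μ / (1 - lam)) * (1 + t) ^ (1 - lam)) * exp X = 1 := by
    rw [← exp_add, neg_mul, neg_add_cancel, exp_zero]
  calc _ ≤ exp (-(μ / (1 - lam)) * (1 + t) ^ (1 - lam)) * (C * ((1 + t) ^ (-β + lam) * exp X)) :=
        mul_le_mul_of_nonneg_left hint (exp_pos _).le
    _ = C * (1 + t) ^ (-β + lam) := by linear_combination C * (1 + t) ^ (-β + lam) * hcancel

theorem stmt_6 (lam μ β : ℝ) (hlam0 : 0 < lam) (hlam1 : lam < 1) (hμ : 0 < μ) (hβ : 0 ≤ β) :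
    ∃ C > (0:ℝ), ∀ t ≥ (0:ℝ),
      Real.exp (-(μ / (1 - lam)) * (1 + t) ^ (1 - lam)) *
          ∫ τ in (0:ℝ)..t, (1 + τ) ^ (-β) * Real.exp ((μ / (1 - lam)) * (1 + τ) ^ (1 - lam))
        ≤ C * (1 + t) ^ (-β + lam) :=
  stmt_6_general lam μ β hlam1 hμ
end

section
/- Let $0 < \lambda < 1$, $\mu > 0$, $C_1 > 0$, and $\beta > \lambda$. Suppose $y: [0,\infty) \to [0,\infty)$ is continuously differentiable and satisfies $y'(t) + \frac{\mu}{(1+t)^{\lambda}} y(t) \leq C_1 (1+t)^{-\beta}$ for all $t \geq 0$. Then there exists $C > 0$ (depending on $\lambda, \mu, \beta, C_1, y(0)$) such that $y(t) \leq C(1+t)^{-\beta+\lambda}$ for all $t \geq 0$. -/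
open Filter Set Real

/-!
The power `z t = C (1 + t) ^ (λ - β)` is a strict supersolution of
`z' + μ (1 + t) ^ (-λ) z > C₁ (1 + t) ^ (-β)` as soon as `C μ > 2 C₁` and `t` is so large that the
loss `(β - λ) (1 + t) ^ (λ - 1)` (which tends to `0` because `λ < 1`) is at most `μ / 2`.
Fencing `y` below `z` from such a time `T` on, and choosing `C` large enough that `z ≥ y` on the
compact interval `[0, T]`, gives the decay bound.
-/

theorem image_le_of_deriv_lt_deriv_boundary_Ici {f f' B B' : ℝ → ℝ} {a : ℝ}
    (hf : ∀ t ≥ a, HasDerivAt f (f' t) t) (hB : ∀ t ≥ a, HasDerivAt B (B' t) t)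
    (ha : f a ≤ B a) (bound : ∀ t ≥ a, f t = B t → f' t < B' t) :
    ∀ t ≥ a, f t ≤ B t := fun t ht =>
  image_le_of_deriv_right_lt_deriv_boundary' (b := t)
    (fun x hx => (hf x hx.1).continuousAt.continuousWithinAt)
    (fun x hx => (hf x hx.1).hasDerivWithinAt) ha
    (fun x hx => (hB x hx.1).continuousAt.continuousWithinAt)
    (fun x hx => (hB x hx.1).hasDerivWithinAt) (fun x hx => bound x hx.1) ⟨ht, le_rfl⟩

theorem subsolution_le_supersolution {y y' z z' k F : ℝ → ℝ} {a : ℝ}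
    (hy : ∀ t ≥ a, HasDerivAt y (y' t) t) (hz : ∀ t ≥ a, HasDerivAt z (z' t) t)
    (ha : y a ≤ z a) (hsub : ∀ t ≥ a, y' t + k t * y t ≤ F t)
    (hsuper : ∀ t ≥ a, F t < z' t + k t * z t) : ∀ t ≥ a, y t ≤ z t :=
  image_le_of_deriv_lt_deriv_boundary_Ici hy hz ha fun t ht heq => by
    have h := hsub t ht
    rw [heq] at h
    linarith [hsuper t ht]

theorem hasDerivAt_one_add_rpow (p : ℝ) {t : ℝ} (ht : 0 < 1 + t) :
    HasDerivAt (fun s => (1 + s) ^ p) (p * (1 + t) ^ (p - 1)) t := by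
  simpa using ((hasDerivAt_id t).const_add 1).rpow_const (p := p) (Or.inl ht.ne')

theorem eventually_mul_one_add_rpow_le {lam : ℝ} (hlam : lam < 1) (c : ℝ) {ε : ℝ} (hε : 0 < ε) :
    ∀ᶠ t in atTop, c * (1 + t) ^ (lam - 1) ≤ ε := by
  have h : Tendsto (fun t : ℝ => c * (1 + t) ^ (lam - 1)) atTop (nhds 0) := by
    have := (tendsto_rpow_neg_atTop (sub_pos.2 hlam)).comp
      (tendsto_atTop_add_const_left _ 1 tendsto_id)
    simpa using this.const_mul c
  exact h.eventually (ge_mem_nhds hε)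

section PowerBarrier

variable {lam μ β : ℝ}

theorem rpow_damping_identity {t : ℝ} (ht : 0 < 1 + t) :
    (-β + lam) * (1 + t) ^ (-β + lam - 1) + μ / (1 + t) ^ lam * (1 + t) ^ (-β + lam)
      = (1 + t) ^ (-β) * (μ - (β - lam) * (1 + t) ^ (lam - 1)) := by
  have hsplit : (1 + t) ^ (-β + lam - 1) = (1 + t) ^ (-β) * (1 + t) ^ (lam - 1) := by
    rw [← rpow_add ht]; ring_nf
  have hpos : 0 < (1 + t) ^ lam := rpow_pos_of_pos ht lam
  rw [hsplit, rpow_add ht]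
  field_simp
  ring

theorem barrier_supersolution {C₁ C t : ℝ} (hC : 0 ≤ C) (hCμ : 2 * C₁ < C * μ)
    (ht : 0 < 1 + t) (hsmall : (β - lam) * (1 + t) ^ (lam - 1) ≤ μ / 2) :
    C₁ * (1 + t) ^ (-β) < C * ((-β + lam) * (1 + t) ^ (-β + lam - 1))
      + μ / (1 + t) ^ lam * (C * (1 + t) ^ (-β + lam)) := by
  have hpos : 0 < (1 + t) ^ (-β) := rpow_pos_of_pos ht _
  calc C₁ * (1 + t) ^ (-β) < C * (μ / 2) * (1 + t) ^ (-β) := by gcongr; linarith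
    _ ≤ C * (μ - (β - lam) * (1 + t) ^ (lam - 1)) * (1 + t) ^ (-β) := by gcongr; linarith
    _ = _ := by linear_combination (-C) * rpow_damping_identity (lam := lam) (μ := μ) (β := β) ht

end PowerBarrier

theorem stmt_15_general (lam μ C₁ β : ℝ) (hlam1 : lam < 1) (hμ : 0 < μ) (hβ : lam < β)
    (y y' : ℝ → ℝ)
    (hderiv : ∀ t ≥ (0:ℝ), HasDerivAt y (y' t) t)
    (hineq : ∀ t ≥ (0:ℝ), y' t + μ / (1 + t) ^ lam * y t ≤ C₁ * (1 + t) ^ (-β)) :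
    ∃ C > (0:ℝ), ∀ t ≥ (0:ℝ), y t ≤ C * (1 + t) ^ (-β + lam) := by
  obtain ⟨T, hT⟩ := eventually_atTop.1 ((eventually_ge_atTop 0).and
    (eventually_mul_one_add_rpow_le hlam1 (β - lam) (half_pos hμ)))
  have hT0 : 0 ≤ T := (hT T le_rfl).1
  obtain ⟨M, hM⟩ := (isCompact_Icc (a := 0) (b := T)).bddAbove_image
    fun x hx => (hderiv x hx.1).continuousAt.continuousWithinAt
  have hP : 0 < (1 + T) ^ (-β + lam) := rpow_pos_of_pos (by linarith) _
  obtain ⟨C, hC0, hCμ, hCM⟩ : ∃ C, 0 < C ∧ 2 * C₁ / μ < C ∧ M / (1 + T) ^ (-β + lam) < C :=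
    ⟨|2 * C₁ / μ| + |M / (1 + T) ^ (-β + lam)| + 1, by positivity,
      by linarith [le_abs_self (2 * C₁ / μ), abs_nonneg (M / (1 + T) ^ (-β + lam))],
      by linarith [le_abs_self (M / (1 + T) ^ (-β + lam)), abs_nonneg (2 * C₁ / μ)]⟩
  have hinit : ∀ t ∈ Icc 0 T, y t ≤ C * (1 + t) ^ (-β + lam) := fun t ht =>
    calc y t ≤ M := hM (mem_image_of_mem y ht)
      _ ≤ C * (1 + T) ^ (-β + lam) := (div_le_iff₀ hP).1 hCM.le
      _ ≤ C * (1 + t) ^ (-β + lam) := by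
        gcongr 1
        exact rpow_le_rpow_of_nonpos (by linarith [ht.1]) (by linarith [ht.2]) (by linarith)
  refine ⟨C, hC0, fun t ht => (le_total t T).elim (fun h => hinit t ⟨ht, h⟩) fun h => ?_⟩
  exact subsolution_le_supersolution (k := fun s => μ / (1 + s) ^ lam)
    (fun s hs => hderiv s (hT0.trans hs))
    (fun s hs => (hasDerivAt_one_add_rpow _ (by linarith)).const_mul C)
    (hinit T ⟨hT0, le_rfl⟩) (fun s hs => hineq s (hT0.trans hs))
    (fun s hs => barrier_supersolution hC0.le ((div_lt_iff₀ hμ).1 hCμ) (by linarith)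
      (hT s hs).2) t h

theorem stmt_15 (lam μ C₁ β : ℝ) (hlam0 : 0 < lam) (hlam1 : lam < 1) (hμ : 0 < μ)
    (hC₁ : 0 < C₁) (hβ : lam < β)
    (y y' : ℝ → ℝ) (hy0 : ∀ t ≥ (0:ℝ), 0 ≤ y t)
    (hderiv : ∀ t ≥ (0:ℝ), HasDerivAt y (y' t) t)
    (hcont : Continuous y')
    (hineq : ∀ t ≥ (0:ℝ), y' t + μ / (1 + t) ^ lam * y t ≤ C₁ * (1 + t) ^ (-β)) :
    ∃ C > (0:ℝ), ∀ t ≥ (0:ℝ), y t ≤ C * (1 + t) ^ (-β + lam) :=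
  stmt_15_general lam μ C₁ β hlam1 hμ hβ y y' hderiv hineq
end

section
/- Let $n \geq 1$, $0 < \lambda < 1$, $\mu > 0$, and set $t_\xi$ by $|\xi| = \frac{\mu}{4}(1+t_\xi)^{-\lambda}$ for $0 < |\xi| \leq \frac{\mu}{4}$, i.e., $1 + t_\xi = (\tfrac{4}{\mu}|\xi|)^{-1/\lambda}$. Let $\alpha \geq 0$ and $C_0 > 0$. Then there exists $C > 0$ such that for all $t \geq 0$, $e^{-C_0(1+t)^{1-\lambda}}\int_{\{\frac{\mu}{4}(1+t)^{-\lambda} \leq |\xi| \leq 1\}} |\xi|^{\alpha} e^{C_0(1-|\xi|^2)(1+t_\xi)^{1-\lambda}}\,d\xi \leq C(1+t)^{-(1-\lambda)(n+\alpha)/2}$. -/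
/-!
On the zone `μ/4 (1+t)^(-λ) ≤ |ξ| ≤ 1` one has `1 + t_ξ ≤ 1 + t`, so the growth factor
`e^{C₀(1-|ξ|²)(1+t_ξ)^{1-λ}}` is at most `e^{C₀(1-|ξ|²)(1+t)^{1-λ}}`; together with the decay
factor in front, the integrand is dominated by the Gaussian moment density `|ξ|^α e^{-b|ξ|²}` with
`b = C₀(1+t)^{1-λ}`. Integrating over all of `ℝⁿ`, that moment is `O(b^{-(n+α)/2})`, which is the
claimed rate.
-/

open MeasureTheory Real

lemma rpow_neg_one_div_le_of_rpow_neg_le {lam r s : ℝ} (hlam : 0 < lam) (hs : 0 < s)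
    (h : s ^ (-lam) ≤ r) : r ^ (-(1 / lam)) ≤ s := by
  calc r ^ (-(1 / lam)) ≤ (s ^ (-lam)) ^ (-(1 / lam)) :=
        rpow_le_rpow_of_nonpos (rpow_pos_of_pos hs _) h (by simp [hlam.le])
    _ = s := by rw [← rpow_mul hs.le, neg_mul_neg, mul_one_div_cancel hlam.ne', rpow_one]

lemma exp_neg_mul_exp_le_exp_neg_mul_sq {lam μ C₀ s x : ℝ} (hlam0 : 0 < lam) (hlam1 : lam ≤ 1)
    (hμ : 0 < μ) (hC₀ : 0 ≤ C₀) (hs : 0 < s) (hx : μ / 4 * s ^ (-lam) ≤ x) (hx1 : x ≤ 1) :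
    exp (-C₀ * s ^ (1 - lam)) * exp (C₀ * (1 - x ^ 2) * ((4 / μ * x) ^ (-(1 / lam))) ^ (1 - lam))
      ≤ exp (-(C₀ * s ^ (1 - lam)) * x ^ 2) := by
  have hx0 : 0 ≤ x := le_trans (by positivity) hx
  have ht_xi : (4 / μ * x) ^ (-(1 / lam)) ≤ s := by
    refine rpow_neg_one_div_le_of_rpow_neg_le hlam0 hs ?_
    calc s ^ (-lam) = 4 / μ * (μ / 4 * s ^ (-lam)) := by field_simp
      _ ≤ 4 / μ * x := by gcongr
  have hcoef : 0 ≤ C₀ * (1 - x ^ 2) := mul_nonneg hC₀ (by nlinarith)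
  rw [← exp_add, exp_le_exp]
  have : ((4 / μ * x) ^ (-(1 / lam))) ^ (1 - lam) ≤ s ^ (1 - lam) :=
    rpow_le_rpow (by positivity) ht_xi (by linarith)
  nlinarith [mul_le_mul_of_nonneg_left this hcoef]

lemma rpow_mul_exp_neg_mul_sq_le {α b x : ℝ} (hα : 0 ≤ α) (hb : 0 < b) (hx : 0 ≤ x) :
    x ^ α * exp (-b * x ^ 2) ≤ α ^ (α / 2) * b ^ (-(α / 2)) * exp (-(b / 2) * x ^ 2) := by
  have hbx : 0 ≤ b * x ^ 2 := by positivity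
  have hmoment : (b * x ^ 2) ^ (α / 2) ≤ α ^ (α / 2) * exp (b * x ^ 2 / 2) := by
    have h := ProbabilityTheory.rpow_abs_le_mul_exp_abs (b * x ^ 2) (p := α / 2) (t := 1 / 2)
      (by positivity) (by norm_num)
    rw [abs_of_nonneg hbx, abs_of_pos (by norm_num : (0 : ℝ) < 1 / 2)] at h
    convert h using 3 <;> ring
  have hsplit : x ^ α = b ^ (-(α / 2)) * (b * x ^ 2) ^ (α / 2) := by
    rw [mul_rpow hb.le (by positivity), ← mul_assoc, ← rpow_add hb, neg_add_cancel, rpow_zero,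
      one_mul, ← rpow_natCast, ← rpow_mul hx]
    ring_nf
  calc x ^ α * exp (-b * x ^ 2)
      = b ^ (-(α / 2)) * ((b * x ^ 2) ^ (α / 2) * exp (-b * x ^ 2)) := by rw [hsplit]; ring
    _ ≤ b ^ (-(α / 2)) * (α ^ (α / 2) * exp (b * x ^ 2 / 2) * exp (-b * x ^ 2)) := by gcongr
    _ = α ^ (α / 2) * b ^ (-(α / 2)) * exp (-(b / 2) * x ^ 2) := by
      rw [mul_assoc _ (exp _), ← exp_add]
      ring_nf

section GaussianMoment

variable {V : Type*} [NormedAddCommGroup V] [InnerProductSpace ℝ V] [FiniteDimensional ℝ V]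
  [MeasurableSpace V] [BorelSpace V]

lemma integrable_exp_neg_mul_sq_norm {b : ℝ} (hb : 0 < b) :
    Integrable (fun v : V => exp (-b * ‖v‖ ^ 2)) :=
  Integrable.of_integral_ne_zero <| by
    rw [GaussianFourier.integral_rexp_neg_mul_sq_norm hb]
    positivity

lemma integrable_norm_rpow_mul_exp_neg_mul_sq_norm {α b : ℝ} (hα : 0 ≤ α) (hb : 0 < b) :
    Integrable (fun v : V => ‖v‖ ^ α * exp (-b * ‖v‖ ^ 2)) :=
  ((integrable_exp_neg_mul_sq_norm (half_pos hb)).const_mul _).mono' (by fun_prop)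
    (Filter.Eventually.of_forall fun v => by
      rw [norm_of_nonneg (by positivity)]
      exact rpow_mul_exp_neg_mul_sq_le hα hb (norm_nonneg v))

lemma integral_norm_rpow_mul_exp_neg_mul_sq_norm_le {α b : ℝ} (hα : 0 ≤ α) (hb : 0 < b) :
    ∫ v : V, ‖v‖ ^ α * exp (-b * ‖v‖ ^ 2) ≤
      α ^ (α / 2) * (2 * π) ^ ((Module.finrank ℝ V : ℝ) / 2) *
        b ^ (-(((Module.finrank ℝ V : ℝ) + α) / 2)) := by
  set d : ℝ := (Module.finrank ℝ V : ℝ)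
  calc ∫ v : V, ‖v‖ ^ α * exp (-b * ‖v‖ ^ 2)
      ≤ ∫ v : V, α ^ (α / 2) * b ^ (-(α / 2)) * exp (-(b / 2) * ‖v‖ ^ 2) :=
        integral_mono_of_nonneg (Filter.Eventually.of_forall fun v => by positivity)
          ((integrable_exp_neg_mul_sq_norm (half_pos hb)).const_mul _)
          (Filter.Eventually.of_forall fun v => rpow_mul_exp_neg_mul_sq_le hα hb (norm_nonneg v))
    _ = α ^ (α / 2) * b ^ (-(α / 2)) * ((2 * π) ^ (d / 2) / b ^ (d / 2)) := by
        rw [integral_const_mul, GaussianFourier.integral_rexp_neg_mul_sq_norm (half_pos hb),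
          div_div_eq_mul_div, mul_comm π 2, div_rpow (by positivity) hb.le]
    _ = α ^ (α / 2) * (2 * π) ^ (d / 2) * b ^ (-((d + α) / 2)) := by
        rw [show -((d + α) / 2) = -(α / 2) + -(d / 2) by ring, rpow_add hb, rpow_neg hb.le (d / 2)]
        ring

end GaussianMoment

theorem stmt_16_general (n : ℕ) (lam μ α C₀ : ℝ) (hlam0 : 0 < lam) (hlam1 : lam < 1)
    (hμ : 0 < μ) (hα : 0 ≤ α) (hC₀ : 0 < C₀) :
    ∃ C > (0:ℝ), ∀ t ≥ (0:ℝ),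
      Real.exp (-C₀ * (1 + t) ^ (1 - lam)) *
          (∫ ξ in {ξ : EuclideanSpace ℝ (Fin n) |
              μ / 4 * (1 + t) ^ (-lam) ≤ ‖ξ‖ ∧ ‖ξ‖ ≤ 1},
            ‖ξ‖ ^ α *
              Real.exp (C₀ * (1 - ‖ξ‖ ^ 2) * ((4 / μ * ‖ξ‖) ^ (-(1 / lam))) ^ (1 - lam)))
        ≤ C * (1 + t) ^ (-((1 - lam) * (n + α) / 2)) := by
  have hK : 0 < α ^ (α / 2) := by
    rcases hα.eq_or_lt with rfl | hα
    · simp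
    · positivity
  refine ⟨α ^ (α / 2) * (2 * π) ^ ((n : ℝ) / 2) * C₀ ^ (-(((n : ℝ) + α) / 2)), by positivity, ?_⟩
  intro t ht
  have hs : 0 < 1 + t := by linarith
  set b := C₀ * (1 + t) ^ (1 - lam) with hb_def
  have hb : 0 < b := by positivity
  set S := {ξ : EuclideanSpace ℝ (Fin n) | μ / 4 * (1 + t) ^ (-lam) ≤ ‖ξ‖ ∧ ‖ξ‖ ≤ 1}
  have hS : MeasurableSet S := by
    simp only [S, Set.ofPred_and]
    exact (measurableSet_le measurable_const measurable_norm).inter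
      (measurableSet_le measurable_norm measurable_const)
  rw [← integral_const_mul]
  calc ∫ ξ in S, exp (-C₀ * (1 + t) ^ (1 - lam)) * (‖ξ‖ ^ α *
          exp (C₀ * (1 - ‖ξ‖ ^ 2) * ((4 / μ * ‖ξ‖) ^ (-(1 / lam))) ^ (1 - lam)))
      ≤ ∫ ξ in S, ‖ξ‖ ^ α * exp (-b * ‖ξ‖ ^ 2) := by
        refine integral_mono_of_nonneg (Filter.Eventually.of_forall fun ξ => by positivity)
          (integrable_norm_rpow_mul_exp_neg_mul_sq_norm hα hb).restrict
          (ae_restrict_of_forall_mem hS fun ξ hξ => ?_)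
        dsimp only
        rw [mul_left_comm]
        gcongr
        exact exp_neg_mul_exp_le_exp_neg_mul_sq hlam0 hlam1.le hμ hC₀.le hs hξ.1 hξ.2
    _ ≤ ∫ ξ, ‖ξ‖ ^ α * exp (-b * ‖ξ‖ ^ 2) :=
        setIntegral_le_integral (integrable_norm_rpow_mul_exp_neg_mul_sq_norm hα hb)
          (Filter.Eventually.of_forall fun ξ => by positivity)
    _ ≤ α ^ (α / 2) * (2 * π) ^ ((n : ℝ) / 2) * b ^ (-(((n : ℝ) + α) / 2)) := by
        simpa using integral_norm_rpow_mul_exp_neg_mul_sq_norm_le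
          (V := EuclideanSpace ℝ (Fin n)) hα hb
    _ = _ := by
        rw [hb_def, mul_rpow hC₀.le (by positivity), ← rpow_mul hs.le,
          show (1 - lam) * -(((n : ℝ) + α) / 2) = -((1 - lam) * (n + α) / 2) by ring]
        ring

theorem stmt_16 (n : ℕ) (hn : 1 ≤ n) (lam μ α C₀ : ℝ) (hlam0 : 0 < lam) (hlam1 : lam < 1)
    (hμ : 0 < μ) (hα : 0 ≤ α) (hC₀ : 0 < C₀) :
    ∃ C > (0:ℝ), ∀ t ≥ (0:ℝ),
      Real.exp (-C₀ * (1 + t) ^ (1 - lam)) *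
          (∫ ξ in {ξ : EuclideanSpace ℝ (Fin n) |
              μ / 4 * (1 + t) ^ (-lam) ≤ ‖ξ‖ ∧ ‖ξ‖ ≤ 1},
            ‖ξ‖ ^ α *
              Real.exp (C₀ * (1 - ‖ξ‖ ^ 2) * ((4 / μ * ‖ξ‖) ^ (-(1 / lam))) ^ (1 - lam)))
        ≤ C * (1 + t) ^ (-((1 - lam) * (n + α) / 2)) :=
  stmt_16_general n lam μ α C₀ hlam0 hlam1 hμ hα hC₀
end
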